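/- Let S be an additively reduced semidomain and G a linearly ordered torsion-free abelian group. If f = ∑_{i=0}^∞ s_i x^{g_i} ∈ S⟦G⟧ with all s_i nonzero and strictly increasing exponents satisfies g_1 − g_0 < g_{i+1} − g_i for every i ≥ 1, then f is monolithic. -/

import Mathlib

/-- Witness that `S` is a semidomain: an injective semiring hom into an integral domain. -/
structure SemidomainWitness (S : Type*) [CommSemiring S] where
  D : Type
  [commRing : CommRing D]
  [isDomain : IsDomain D]
  emb : S →+* D
  inj : Function.Injective emb

/-- `S` is a semidomain, i.e. (isomorphic to) a subsemiring of an integral domain. -/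
def IsSemidomain (S : Type*) [CommSemiring S] : Prop := Nonempty (SemidomainWitness S)

/-- `S` is additively reduced: `0` is the only additively invertible element. -/
def AddReduced (S : Type*) [AddZeroClass S] : Prop := ∀ a b : S, a + b = 0 → a = 0

/-- `s` is an atom of the additive monoid `(S, +)` (for `S` additively reduced):
it is nonzero and cannot be written as a sum of two nonzero elements. -/
def IsAddAtom {S : Type*} [AddZeroClass S] (s : S) : Prop :=
  s ≠ 0 ∧ ∀ a b : S, s = a + b → a = 0 ∨ b = 0

/-- `S` is additively Furstenberg: every nonzero element is divisible in `(S, +)`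
by an additive atom. -/
def AddFurstenberg (S : Type*) [AddZeroClass S] : Prop :=
  ∀ s : S, s ≠ 0 → ∃ a t : S, IsAddAtom a ∧ s = a + t


section Series
variable {S : Type*} [CommSemiring S] {G : Type*} [AddCommGroup G] [LinearOrder G] [IsOrderedAddMonoid G]

/-- `f` belongs to the group series semidomain `S⟦G⟧`: its support is contained in the range
of a strictly increasing sequence of exponents, so `f` is a formal sum `∑_{i=0}^∞ s_i x^{g_i}`. -/
def InSeries (f : HahnSeries G S) : Prop :=
  ∃ g : ℕ → G, StrictMono g ∧ f.support ⊆ Set.range g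

/-- A monomial `s·x^g` in `S⟦G⟧`. -/
def IsMonomialSeries (f : HahnSeries G S) : Prop :=
  ∃ (g : G) (s : S), f = HahnSeries.single g s

/-- `f` is monolithic in `S⟦G⟧`: every factorization of `f` within `S⟦G⟧` has a
monomial factor. -/
def MonolithicSeries (f : HahnSeries G S) : Prop :=
  f ≠ 0 ∧ ∀ p q : HahnSeries G S, InSeries p → InSeries q → f = p * q →
    IsMonomialSeries p ∨ IsMonomialSeries q

/-- `f` is a unit of the semidomain `S⟦G⟧`. -/
def IsUnitSeries (f : HahnSeries G S) : Prop :=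
  InSeries f ∧ ∃ h : HahnSeries G S, InSeries h ∧ f * h = 1

/-- `f` is irreducible in the multiplicative monoid of nonzero elements of `S⟦G⟧`. -/
def IrreducibleSeries (f : HahnSeries G S) : Prop :=
  InSeries f ∧ f ≠ 0 ∧ ¬ IsUnitSeries f ∧
    ∀ p q : HahnSeries G S, InSeries p → InSeries q → f = p * q →
      IsUnitSeries p ∨ IsUnitSeries q

end Series

/-!
Since `S` is additively reduced and has no zero divisors, no cancellation can occur in a product,
so `supp(pq) = supp p + supp q`. Write `g₀ = a + b` with `a`, `b` the least exponents of `p`, `q`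
and `g₁ = x + y`; one of `x > a`, `y > b` holds, say `x > a`, and then `x + b = g₁`. If `q` had a
second exponent `b' > b`, then `a + b' = gⱼ` with `j ≥ 1` and `x + b' = gⱼ + (g₁ - g₀)` would be an
exponent of `f` strictly between `gⱼ` and `gⱼ₊₁`, contradicting the gap condition.
-/

open Pointwise

theorem IsSemidomain.noZeroDivisors {S : Type*} [CommSemiring S] (hS : IsSemidomain S) :
    NoZeroDivisors S := by
  obtain ⟨W⟩ := hS
  let _ := W.commRing
  have := W.isDomain
  exact W.inj.noZeroDivisors W.emb (map_zero W.emb) (map_mul W.emb)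

theorem AddReduced.eq_zero_of_sum_eq_zero {S : Type*} [AddCommMonoid S] (hred : AddReduced S)
    {ι : Type*} {t : Finset ι} {F : ι → S} (h : ∑ i ∈ t, F i = 0) {i : ι} (hi : i ∈ t) :
    F i = 0 := by
  classical
  exact hred _ _ ((Finset.add_sum_erase t F hi).trans h)

namespace HahnSeries

variable {G : Type*} [AddCommGroup G] [LinearOrder G] {S : Type*} [CommSemiring S]

theorem support_mul_of_addReduced [IsOrderedAddMonoid G] [NoZeroDivisors S] (hred : AddReduced S)
    (p q : HahnSeries G S) : (p * q).support = p.support + q.support := by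
  refine support_mul_subset.antisymm ?_
  rintro _ ⟨u, hu, v, hv, rfl⟩ h0
  rw [coeff_mul] at h0
  exact mul_ne_zero hu hv
    (hred.eq_zero_of_sum_eq_zero h0 (i := (u, v)) (Finset.mem_antidiagonal.mpr ⟨hu, hv, rfl⟩))

theorem isMonomialSeries_of_support_subsingleton {r : HahnSeries G S}
    (hr : r.support.Subsingleton) : IsMonomialSeries r := by
  rcases hr.eq_empty_or_singleton with h | ⟨c, hc⟩
  · exact ⟨0, 0, by rw [single_eq_zero, ← support_eq_empty_iff, h]⟩
  · refine ⟨c, r.coeff c, ?_⟩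
    ext e
    by_cases he : e = c
    · rw [he, coeff_single_same]
    · rw [coeff_single_of_ne he]
      have : e ∉ r.support := hc ▸ he
      simpa [mem_support] using this

end HahnSeries

theorem one_le_of_lt_of_add_eq_range {G : Type*} [Add G] [Preorder G]
    {g : ℕ → G} {A B : Set G} (hg : StrictMono g) (hAB : A + B = Set.range g)
    {u v : G} (hu : u ∈ A) (hv : v ∈ B) (h0 : g 0 < u + v) : ∃ j, 1 ≤ j ∧ u + v = g j := by
  obtain ⟨j, hj⟩ : u + v ∈ Set.range g := hAB ▸ Set.add_mem_add hu hv
  exact ⟨j, hg.lt_iff_lt.mp (hj ▸ h0), hj.symm⟩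

section SumsetOfRange

variable {G : Type*} [AddCommGroup G] [LinearOrder G] [IsOrderedAddMonoid G]
  {g : ℕ → G} {A B : Set G} {a b : G}

theorem isLeast_of_add_eq_range (hg : StrictMono g) (hAB : A + B = Set.range g)
    (ha : a ∈ A) (hb : b ∈ B) (h0 : a + b = g 0) : IsLeast A a := by
  refine ⟨ha, fun u hu => ?_⟩
  obtain ⟨n, hn⟩ : u + b ∈ Set.range g := hAB ▸ Set.add_mem_add hu hb
  have : a + b ≤ u + b := h0 ▸ hn ▸ hg.monotone n.zero_le
  exact le_of_add_le_add_right this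

theorem subsingleton_of_add_eq_range_of_lt (hg : StrictMono g)
    (hgap : ∀ i : ℕ, 1 ≤ i → g 1 - g 0 < g (i + 1) - g i) (hAB : A + B = Set.range g)
    (hA : IsLeast A a) (hB : IsLeast B b) (h0 : a + b = g 0)
    {x y : G} (hx : x ∈ A) (hy : y ∈ B) (hxy : x + y = g 1) (hax : a < x) : B.Subsingleton := by
  suffices hle : ∀ b' ∈ B, b' ≤ b from
    fun u hu v hv => (le_antisymm (hle u hu) (hB.2 hu)).trans (le_antisymm (hle v hv) (hB.2 hv)).symm
  intro b' hb'
  by_contra! hbb'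
  have hxb : x + b = g 1 := by
    obtain ⟨m, hm1, hm⟩ := one_le_of_lt_of_add_eq_range hg hAB hx hB.1
      (h0 ▸ add_lt_add_left hax b)
    exact le_antisymm (hxy ▸ add_le_add_right (hB.2 hy) x) (hm ▸ hg.monotone hm1)
  obtain ⟨j, hj1, hj⟩ := one_le_of_lt_of_add_eq_range hg hAB hA.1 hb'
    (h0 ▸ add_lt_add_right hbb' a)
  obtain ⟨k, -, hk⟩ := one_le_of_lt_of_add_eq_range hg hAB hx hb'
    (h0 ▸ add_lt_add hax hbb')
  have hgk : g k = g j + (g 1 - g 0) := by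
    rw [← hk, ← hj, ← hxb, ← h0]; abel
  have hjk : j < k := hg.lt_iff_lt.mp (hgk ▸ lt_add_of_pos_right _ (sub_pos.mpr (hg one_pos)))
  have : g (j + 1) ≤ g j + (g 1 - g 0) := hgk ▸ hg.monotone hjk
  exact (lt_sub_iff_add_lt'.mp (hgap j hj1)).not_ge this

theorem subsingleton_or_subsingleton_of_add_eq_range (hg : StrictMono g)
    (hgap : ∀ i : ℕ, 1 ≤ i → g 1 - g 0 < g (i + 1) - g i) (hAB : A + B = Set.range g) :
    A.Subsingleton ∨ B.Subsingleton := by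
  have hBA : B + A = Set.range g := add_comm A B ▸ hAB
  obtain ⟨a, ha, b, hb, h0⟩ : g 0 ∈ A + B := hAB ▸ Set.mem_range_self 0
  obtain ⟨x, hx, y, hy, hxy⟩ : g 1 ∈ A + B := hAB ▸ Set.mem_range_self 1
  have hA := isLeast_of_add_eq_range hg hAB ha hb h0
  have hB := isLeast_of_add_eq_range hg hBA hb ha (add_comm b a ▸ h0)
  rcases (hA.2 hx).lt_or_eq with hax | rfl
  · exact .inr (subsingleton_of_add_eq_range_of_lt hg hgap hAB hA hB h0 hx hy hxy hax)
  rcases (hB.2 hy).lt_or_eq with hby | rfl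
  · exact .inl (subsingleton_of_add_eq_range_of_lt hg hgap hBA hB hA (add_comm b a ▸ h0) hy hx
      (add_comm a y ▸ hxy) hby)
  · exact absurd (h0.symm.trans hxy) (hg.injective.ne zero_ne_one)

end SumsetOfRange

theorem series_monolithic_of_first_gap_least_general
    {S : Type*} [CommSemiring S] {G : Type*} [AddCommGroup G] [LinearOrder G] [IsOrderedAddMonoid G]
    (hS : IsSemidomain S) (hred : AddReduced S)
    (g : ℕ → G) (hg : StrictMono g)
    (f : HahnSeries G S)
    (hsupp : f.support = Set.range g)
    (hgap : ∀ i : ℕ, 1 ≤ i → g 1 - g 0 < g (i + 1) - g i) :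
    MonolithicSeries f := by
  have := hS.noZeroDivisors
  refine ⟨HahnSeries.support_nonempty_iff.mp (hsupp ▸ Set.range_nonempty g), ?_⟩
  rintro p q - - rfl
  rw [HahnSeries.support_mul_of_addReduced hred] at hsupp
  exact (subsingleton_or_subsingleton_of_add_eq_range hg hgap hsupp).imp
    HahnSeries.isMonomialSeries_of_support_subsingleton
    HahnSeries.isMonomialSeries_of_support_subsingleton

/-- If `f = ∑_{i=0}^∞ s_i x^{g_i} ∈ S⟦G⟧` has all `s_i ≠ 0`, strictly increasing exponents,
and `g_1 - g_0 < g_{i+1} - g_i` for every `i ≥ 1`, then `f` is monolithic. -/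
theorem series_monolithic_of_first_gap_least
    {S : Type*} [CommSemiring S] {G : Type*} [AddCommGroup G] [LinearOrder G] [IsOrderedAddMonoid G]
    (hS : IsSemidomain S) (hred : AddReduced S)
    (s : ℕ → S) (g : ℕ → G) (hg : StrictMono g) (hs : ∀ i, s i ≠ 0)
    (f : HahnSeries G S)
    (hcoeff : ∀ i, f.coeff (g i) = s i) (hsupp : f.support = Set.range g)
    (hgap : ∀ i : ℕ, 1 ≤ i → g 1 - g 0 < g (i + 1) - g i) :
    MonolithicSeries f :=
  series_monolithic_of_first_gap_least_general hS hred g hg f hsupp hgap
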